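/- arXiv:2506.03625 — 6 statements merged into one kernel-verified Lean document; each statement's English description precedes it below -/
import Mathlib

section
/- Let a ≥ 2 and b be coprime positive integers. Then the number π*(a,b) of primes not representable as au + bv with u, v nonnegative integers satisfies π*(a,b) = Σ_{v=1}^{a−1} #{p prime : p < bv and p ≡ bv (mod a)}. -/
/-!
Let `v < a` be the residue with `b v ≡ n (mod a)`. If `n ≥ b v`, then `n - b v` is a multiple of `a`
and `n ∈ ⟨a, b⟩`; conversely any representation `n = a u + b w` has `w ≡ v (mod a)`, hence `w ≥ v`.
So the gaps of `⟨a, b⟩` are partitioned, according to `v ∈ [1, a - 1]`, into the sets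
`{n < b v : n ≡ b v (mod a)}`, and counting the primes in each piece gives the formula.
-/

/-- `piStar a b` is the number of primes not representable as `a*u + b*v`
with `u, v` nonnegative integers, i.e. the number of primes not in the
numerical semigroup `⟨a, b⟩`. -/
noncomputable def piStar (a b : ℕ) : ℕ :=
  Set.ncard {p : ℕ | p.Prime ∧ ¬ ∃ u v : ℕ, p = a * u + b * v}

namespace Nat.Coprime

variable {a b : ℕ}

theorem exists_lt_mul_modEq (ha : a ≠ 0) (hab : a.Coprime b) (n : ℕ) :
    ∃ v < a, b * v ≡ n [MOD a] := by
  have : NeZero a := ⟨ha⟩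
  have hb : IsUnit (b : ZMod a) := (ZMod.isUnit_iff_coprime b a).mpr hab.symm
  refine ⟨((n : ZMod a) * (b : ZMod a)⁻¹).val, ZMod.val_lt _, ?_⟩
  rw [← ZMod.natCast_eq_natCast_iff]
  push_cast
  rw [ZMod.natCast_val, ZMod.cast_id', id, mul_left_comm, ZMod.mul_inv_of_unit _ hb, mul_one]

theorem eq_of_mul_modEq_mul (hab : a.Coprime b) {v w : ℕ} (hv : v < a) (hw : w < a)
    (h : b * v ≡ b * w [MOD a]) : v = w :=
  (h.cancel_left_of_coprime hab).eq_of_lt_of_lt hv hw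

theorem not_exists_eq_mul_add_mul_iff (hab : a.Coprime b) (n : ℕ) :
    (¬ ∃ u v, n = a * u + b * v) ↔
      ∃ v ∈ Finset.Icc 1 (a - 1), n < b * v ∧ n ≡ b * v [MOD a] := by
  constructor
  · intro hn
    rcases eq_or_ne a 0 with rfl | ha
    · exact absurd ⟨0, n, by simp [(Nat.coprime_zero_left b).mp hab]⟩ hn
    obtain ⟨v, hva, hv⟩ := hab.exists_lt_mul_modEq ha n
    have hlt : n < b * v := by
      by_contra! hle
      obtain ⟨u, hu⟩ := (Nat.modEq_iff_dvd' hle).mp hv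
      exact hn ⟨u, v, by omega⟩
    have hv0 : v ≠ 0 := by rintro rfl; simp at hlt
    exact ⟨v, Finset.mem_Icc.mpr ⟨by omega, by omega⟩, hlt, hv.symm⟩
  · rintro ⟨v, hv, hlt, hmod⟩ ⟨u, w, rfl⟩
    rw [Finset.mem_Icc] at hv
    have hwv : w < v := Nat.lt_of_mul_lt_mul_left (lt_of_le_of_lt (Nat.le_add_left _ _) hlt)
    have : w = v :=
      hab.eq_of_mul_modEq_mul (by omega) (by omega) ((Nat.mul_add_mod a u (b * w)).symm.trans hmod)
    omega

end Nat.Coprime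

theorem piStar_eq_sum_general (a b : ℕ)
    (hab : Nat.Coprime a b) :
    piStar a b =
      ∑ v ∈ Finset.Icc 1 (a - 1),
        Set.ncard {p : ℕ | p.Prime ∧ p < b * v ∧ p ≡ b * v [MOD a]} := by
  set S : ℕ → Set ℕ := fun v => {p | p.Prime ∧ p < b * v ∧ p ≡ b * v [MOD a]}
  have hunion : {p : ℕ | p.Prime ∧ ¬ ∃ u v : ℕ, p = a * u + b * v} =
      ⋃ v ∈ (Finset.Icc 1 (a - 1) : Set ℕ), S v := by
    ext p
    simp only [Set.mem_ofPred_eq, hab.not_exists_eq_mul_add_mul_iff, Set.mem_iUnion,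
      Finset.mem_coe, S]
    tauto
  have hfin : ∀ v, (S v).Finite := fun v => (Set.finite_lt_nat (b * v)).subset fun _ hp => hp.2.1
  have hdisj : (Finset.Icc 1 (a - 1) : Set ℕ).PairwiseDisjoint S := by
    intro v hv w hw hne
    simp only [Finset.coe_Icc, Set.mem_Icc] at hv hw
    exact Set.disjoint_left.mpr fun p hpv hpw =>
      hne (hab.eq_of_mul_modEq_mul (by omega) (by omega) (hpv.2.2.symm.trans hpw.2.2))
  rw [piStar, hunion, (Finset.finite_toSet _).ncard_biUnion (fun v _ => hfin v) hdisj,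
    finsum_mem_coe_finset]

theorem piStar_eq_sum (a b : ℕ) (ha : 2 ≤ a) (hb : 0 < b)
    (hab : Nat.Coprime a b) :
    piStar a b =
      ∑ v ∈ Finset.Icc 1 (a - 1),
        Set.ncard {p : ℕ | p.Prime ∧ p < b * v ∧ p ≡ b * v [MOD a]} :=
  piStar_eq_sum_general a b hab
end

section
/- Let a ≥ 3 and b > a be coprime integers. Then π*(a,b) ≥ π(b−1; a, b) + Σ_{v=2, gcd(v,a)=1}^{a−2} π(bv; a, bv) + π(S(a,b); a, b(a−1)), where π*(a,b) is the number of primes not representable as au + bv with u, v nonnegative integers, S(a,b) = ab − a − b, and the middle sum is taken to be 0 when a = 3. -/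
/-- `piMod x m l` is the number of primes `p ≤ x` with `p ≡ l (mod m)`. -/
noncomputable def piMod (x m l : ℕ) : ℕ :=
  Set.ncard {p : ℕ | p.Prime ∧ p ≤ x ∧ p ≡ l [MOD m]}

/-- `S a b = a*b - a - b` (the Frobenius-type quantity). -/
def S (a b : ℕ) : ℕ := a * b - a - b

/-!
No `n ≡ b * v (mod a)` with `v < a` and `n < b * v` lies in `⟨a, b⟩`: in a representation
`n = a * u + b * w` the coprimality of `a` and `b` forces `w ≡ v (mod a)`, hence `w ≥ v`.
So all primes below `b * v` in the residue class of `b * v` are missing from `⟨a, b⟩`, and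
distinct `v < a` give distinct residue classes. The three terms of the bound count such primes
for `v = 1`, for `2 ≤ v ≤ a - 2` (where `b * v` itself is composite) and for `v = a - 1`
(where `S a b < b * (a - 1)`).
-/

theorem piMod_mono {x y : ℕ} (m l : ℕ) (hxy : x ≤ y) : piMod x m l ≤ piMod y m l :=
  Set.ncard_le_ncard (fun _ ⟨hp, hpx, hpl⟩ => ⟨hp, hpx.trans hxy, hpl⟩)
    ((Set.finite_Iic y).subset fun _ hp => hp.2.1)

theorem piMod_sub_one_of_not_prime {x : ℕ} (m l : ℕ) (hx : ¬ x.Prime) :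
    piMod x m l = piMod (x - 1) m l := by
  unfold piMod
  congr 1
  ext p
  refine and_congr_right fun hp => and_congr_left fun _ => ?_
  have : p ≠ x := fun hpx => hx (hpx ▸ hp)
  omega

section Semigroup

variable {a b : ℕ}

theorem not_exists_eq_mul_add_mul_of_lt (h : a.Coprime b) {v n : ℕ} (hv : v < a)
    (hn : n ≡ b * v [MOD a]) (hlt : n < b * v) : ¬ ∃ u w : ℕ, n = a * u + b * w := by
  rintro ⟨u, w, rfl⟩
  have hbw : b * w ≡ b * v [MOD a] := by
    simpa [Nat.ModEq, Nat.mul_add_mod] using hn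
  have hwv : w % a = v := by
    rw [← Nat.mod_eq_of_lt hv]; exact Nat.ModEq.cancel_left_of_coprime h hbw
  have : b * v ≤ b * w := Nat.mul_le_mul_left b (hwv ▸ Nat.mod_le w a)
  omega

theorem le_S_of_not_exists_eq_mul_add_mul (h : a.Coprime b) (ha : 1 < a) (hb : 1 < b) {n : ℕ}
    (hn : ¬ ∃ u v : ℕ, n = a * u + b * v) : n ≤ S a b := by
  refine (frobeniusNumber_pair h ha hb).2 fun hmem => hn ?_
  obtain ⟨u, v, huv⟩ := (AddSubmonoid.mem_closure_pair _ _ _).mp hmem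
  exact ⟨u, v, by rw [← huv, smul_eq_mul, smul_eq_mul, mul_comm u, mul_comm v]⟩

theorem sum_piMod_le_piStar (h : a.Coprime b) (ha : 1 < a) (hb : 1 < b) {V : Finset ℕ}
    (hV : ∀ v ∈ V, v < a) : ∑ v ∈ V, piMod (b * v - 1) a (b * v) ≤ piStar a b := by
  set s : ℕ → Set ℕ := fun v => {p | p.Prime ∧ p ≤ b * v - 1 ∧ p ≡ b * v [MOD a]}
  have hs_fin : ∀ v ∈ (V : Set ℕ), (s v).Finite :=
    fun v _ => (Set.finite_Iic (b * v - 1)).subset fun _ hp => hp.2.1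
  have hs_disj : (V : Set ℕ).PairwiseDisjoint s := by
    intro v hv w hw hvw
    refine Set.disjoint_left.mpr fun p hpv hpw => hvw ?_
    exact (Nat.ModEq.cancel_left_of_coprime h (hpv.2.2.symm.trans hpw.2.2)).eq_of_lt_of_lt
      (hV v hv) (hV w hw)
  have hs_sub :
      (⋃ v ∈ (V : Set ℕ), s v) ⊆ {p | p.Prime ∧ ¬ ∃ u v : ℕ, p = a * u + b * v} := by
    simp only [Set.iUnion_subset_iff]
    intro v hv p ⟨hp, hple, hmod⟩
    exact ⟨hp, not_exists_eq_mul_add_mul_of_lt h (hV v hv) hmod (by have := hp.pos; omega)⟩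
  have hfin : {p | p.Prime ∧ ¬ ∃ u v : ℕ, p = a * u + b * v}.Finite :=
    (Set.finite_Iic (S a b)).subset fun _ hp => le_S_of_not_exists_eq_mul_add_mul h ha hb hp.2
  calc ∑ v ∈ V, piMod (b * v - 1) a (b * v)
      = (⋃ v ∈ (V : Set ℕ), s v).ncard := by
        rw [(V.finite_toSet).ncard_biUnion hs_fin hs_disj, finsum_mem_coe_finset]; rfl
    _ ≤ piStar a b := Set.ncard_le_ncard hs_sub hfin

end Semigroup

theorem piStar_lower_bound_sum (a b : ℕ) (ha : 3 ≤ a) (hab : a < b)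
    (h : Nat.Coprime a b) :
    piMod (b - 1) a b +
      (∑ v ∈ (Finset.Icc 2 (a - 2)).filter (fun v => Nat.gcd v a = 1),
        piMod (b * v) a (b * v)) +
      piMod (S a b) a (b * (a - 1)) ≤ piStar a b := by
  set F := (Finset.Icc 2 (a - 2)).filter (fun v => Nat.gcd v a = 1)
  set f : ℕ → ℕ := fun v => piMod (b * v - 1) a (b * v)
  have hF : ∀ v ∈ F, 2 ≤ v ∧ v ≤ a - 2 := fun v hv =>
    Finset.mem_Icc.mp (Finset.mem_filter.mp hv).1
  have h_middle : ∀ v ∈ F, piMod (b * v) a (b * v) = f v := fun v hv =>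
    piMod_sub_one_of_not_prime a _ (Nat.not_prime_mul (by omega) (by have := hF v hv; omega))
  have h_last : S a b ≤ b * (a - 1) - 1 := by
    have : b * (a - 1) = a * b - b := by rw [Nat.mul_sub_one, mul_comm]
    unfold S; omega
  have h1 : 1 ∉ insert (a - 1) F := by
    simp only [Finset.mem_insert, not_or]
    exact ⟨by omega, fun hmem => by have := hF 1 hmem; omega⟩
  have h2 : a - 1 ∉ F := fun hmem => by have := hF _ hmem; omega
  have hV : ∀ v ∈ insert 1 (insert (a - 1) F), v < a := by
    simp only [Finset.forall_mem_insert]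
    exact ⟨by omega, by omega, fun v hv => by have := hF v hv; omega⟩
  calc piMod (b - 1) a b + ∑ v ∈ F, piMod (b * v) a (b * v) + piMod (S a b) a (b * (a - 1))
      ≤ f 1 + ∑ v ∈ F, f v + f (a - 1) := by
        rw [Finset.sum_congr rfl h_middle, show f 1 = piMod (b - 1) a b by simp [f]]
        exact Nat.add_le_add_left (piMod_mono a _ h_last) _
    _ = ∑ v ∈ insert 1 (insert (a - 1) F), f v := by
        rw [Finset.sum_insert h1, Finset.sum_insert h2]; ring
    _ ≤ piStar a b := sum_piMod_le_piStar h (by omega) (by omega) hV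
end

section
/- Let a ≥ 3 and b > a be coprime integers. Then π*(a,b) ≤ Σ_{v=1, gcd(v,a)=1}^{a−1} π(bv; a, bv) + ω(a), where π*(a,b) is the number of primes not representable as au + bv with u, v nonnegative integers and ω(a) is the number of distinct prime factors of a. -/
/-!
Given a prime `p ∉ ⟨a, b⟩`, pick `v < a` with `b v ≡ p (mod a)`. If `b v ≤ p` then
`p = a u + b v` would be representable, so `p < b v` and `v ≥ 1`.
Since `gcd (b v, a) = gcd (p, a)`, either `p ∣ a` (at most `ω(a)` primes) or `v` is coprime
to `a` and `p` is one of the `π(b v; a, b v)` primes counted for this `v`.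
-/

namespace Nat

theorem ModEq.exists_eq_mul_add_mul {a b p v : ℕ} (h : b * v ≡ p [MOD a]) (hle : b * v ≤ p) :
    ∃ u, p = a * u + b * v := by
  obtain ⟨u, hu⟩ := (modEq_iff_dvd' hle).mp h
  exact ⟨u, by omega⟩

theorem ModEq.coprime_of_mul {a b p v : ℕ} (h : b * v ≡ p [MOD a]) (hp : Coprime p a) :
    Coprime v a :=
  Coprime.coprime_mul_left (h.gcd_eq.trans hp)

end Nat

theorem primes_not_mem_semigroup_subset {a b : ℕ} (ha : a ≠ 0) (h : Nat.Coprime a b) :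
    {p : ℕ | p.Prime ∧ ¬ ∃ u v : ℕ, p = a * u + b * v} ⊆
      (⋃ v ∈ (Finset.Icc 1 (a - 1)).filter (fun v => Nat.gcd v a = 1),
        {p : ℕ | p.Prime ∧ p ≤ b * v ∧ p ≡ b * v [MOD a]}) ∪ ↑a.primeFactors := by
  rintro p ⟨hp, hnotRep⟩
  by_cases hpa : p ∣ a
  · exact Or.inr (Nat.mem_primeFactors.mpr ⟨hp, hpa, ha⟩)
  obtain ⟨v, hva, hmod : b * v ≡ p [MOD a]⟩ := Nat.exists_mul_mod_eq_of_coprime p h.symm ha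
  have hlt : p < b * v := lt_of_not_ge fun hle =>
    hnotRep ((hmod.exists_eq_mul_add_mul hle).imp fun _ hu => ⟨v, hu⟩)
  have hv0 : v ≠ 0 := by rintro rfl; simp at hlt
  have hcop : Nat.Coprime v a := hmod.coprime_of_mul ((Nat.Prime.coprime_iff_not_dvd hp).mpr hpa)
  refine Or.inl (Set.mem_biUnion (x := v) ?_ ⟨hp, hlt.le, hmod.symm⟩)
  simp only [Finset.coe_filter, Finset.mem_Icc, Set.mem_ofPred_eq]
  exact ⟨⟨by omega, by omega⟩, hcop⟩

theorem piStar_upper_bound_sum_general (a b : ℕ) (ha : 3 ≤ a)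
    (h : Nat.Coprime a b) :
    piStar a b ≤
      (∑ v ∈ (Finset.Icc 1 (a - 1)).filter (fun v => Nat.gcd v a = 1),
        piMod (b * v) a (b * v)) + a.primeFactors.card := by
  set F := (Finset.Icc 1 (a - 1)).filter (fun v => Nat.gcd v a = 1)
  set S : ℕ → Set ℕ := fun v => {p : ℕ | p.Prime ∧ p ≤ b * v ∧ p ≡ b * v [MOD a]}
  have hfinite : ((⋃ v ∈ F, S v) ∪ ↑a.primeFactors).Finite :=
    (F.finite_toSet.biUnion fun v _ =>
      (Set.finite_Iic (b * v)).subset fun _ hp => hp.2.1).union a.primeFactors.finite_toSet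
  calc piStar a b ≤ ((⋃ v ∈ F, S v) ∪ ↑a.primeFactors).ncard :=
        Set.ncard_le_ncard (primes_not_mem_semigroup_subset (by omega) h) hfinite
    _ ≤ (⋃ v ∈ F, S v).ncard + a.primeFactors.card := by
        simpa only [Set.ncard_coe_finset] using
          Set.ncard_union_le (⋃ v ∈ F, S v) ↑a.primeFactors
    _ ≤ (∑ v ∈ F, piMod (b * v) a (b * v)) + a.primeFactors.card :=
        Nat.add_le_add_right (F.set_ncard_biUnion_le S) _

theorem piStar_upper_bound_sum (a b : ℕ) (ha : 3 ≤ a) (hab : a < b)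
    (h : Nat.Coprime a b) :
    piStar a b ≤
      (∑ v ∈ (Finset.Icc 1 (a - 1)).filter (fun v => Nat.gcd v a = 1),
        piMod (b * v) a (b * v)) + a.primeFactors.card :=
  piStar_upper_bound_sum_general a b ha h
end

section
/- For every positive integer a, the number of integers v with 1 ≤ v ≤ 0.1·a and gcd(v,a) = 1 is at most 0.1·φ(a) + 2^{ω(a)}, where φ is Euler's totient function and ω(a) is the number of distinct prime factors of a. -/
/-!
Legendre's sieve: Möbius inversion gives `#{v ≤ x | (v, a) = 1} = ∑_{d ∣ a} μ(d) ⌊x / d⌋` and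
`φ(a) = ∑_{d ∣ a} μ(d) a / d`, so the count differs from `x φ(a) / a` by at most
`∑_{d ∣ a} |μ(d)|`, the number of squarefree divisors of `a`, which is `2 ^ ω(a)`.
-/

open Finset ArithmeticFunction ArithmeticFunction.Moebius
open scoped Nat

theorem Nat.divisors_gcd_eq_filter_dvd {a : ℕ} (ha : a ≠ 0) (v : ℕ) :
    (v.gcd a).divisors = {d ∈ a.divisors | d ∣ v} := by
  ext d
  simp only [Nat.mem_divisors, Nat.dvd_gcd_iff, ne_eq, Nat.gcd_eq_zero_iff, ha, and_false,
    not_false_eq_true, and_true, mem_filter]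
  tauto

theorem sum_moebius_divisors_filter_dvd {a : ℕ} (ha : a ≠ 0) (v : ℕ) :
    ∑ d ∈ a.divisors with d ∣ v, μ d = if v.Coprime a then 1 else 0 := by
  rw [← Nat.divisors_gcd_eq_filter_dvd ha, ← coe_mul_zeta_apply, moebius_mul_coe_zeta, one_apply]

theorem card_filter_coprime_Ioc_eq_sum_moebius {a : ℕ} (ha : a ≠ 0) (N : ℕ) :
    (#{v ∈ Ioc 0 N | v.Coprime a} : ℤ) = ∑ d ∈ a.divisors, μ d * (N / d : ℕ) := by
  calc (#{v ∈ Ioc 0 N | v.Coprime a} : ℤ)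
      = ∑ v ∈ Ioc 0 N, ∑ d ∈ a.divisors with d ∣ v, μ d := by
        simp [sum_moebius_divisors_filter_dvd ha, Finset.sum_boole]
    _ = ∑ d ∈ a.divisors, ∑ v ∈ Ioc 0 N with d ∣ v, μ d := by
        simp only [sum_filter]; exact sum_comm
    _ = ∑ d ∈ a.divisors, μ d * (N / d : ℕ) := by
        simp [Nat.Ioc_filter_dvd_card_eq_div, mul_comm]

theorem totient_eq_sum_moebius_mul_div {R : Type*} [Ring R] (a : ℕ) :
    (φ a : R) = ∑ d ∈ a.divisors, (μ d : R) * (a / d : ℕ) := by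
  rcases a.eq_zero_or_pos with rfl | ha
  · simp
  have := (sum_eq_iff_sum_mul_moebius_eq (f := fun n => (φ n : R))
    (g := fun n => (n : R))).mp (fun n _ => by rw [← Nat.cast_sum, Nat.sum_totient]) a ha
  rw [← this, Nat.sum_divisorsAntidiagonal (f := fun d e => (μ d : R) * e)]

theorem sum_abs_moebius_divisors {a : ℕ} (ha : a ≠ 0) :
    ∑ d ∈ a.divisors, |μ d| = 2 ^ a.primeFactors.card := by
  have h := Nat.sum_divisors_filter_squarefree ha (f := fun _ => (1 : ℤ))
  simp only [sum_const, nsmul_eq_mul, mul_one, card_powerset, Nat.factors_eq] at h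
  simp only [abs_moebius, ← sum_filter, sum_const, nsmul_eq_mul, mul_one]
  rw [h]
  norm_cast

theorem abs_natFloor_sub_le {x : ℝ} (hx : 0 ≤ x) : |(⌊x⌋₊ : ℝ) - x| ≤ 1 := by
  rw [abs_sub_le_iff]
  constructor <;> linarith [Nat.floor_le hx, Nat.lt_floor_add_one x]

theorem abs_card_filter_coprime_Ioc_floor_sub_le {a : ℕ} (ha : a ≠ 0) {x : ℝ} (hx : 0 ≤ x) :
    |(#{v ∈ Ioc 0 ⌊x⌋₊ | v.Coprime a} : ℝ) - x / a * φ a| ≤ 2 ^ a.primeFactors.card := by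
  have hcount : (#{v ∈ Ioc 0 ⌊x⌋₊ | v.Coprime a} : ℝ) = ∑ d ∈ a.divisors, (μ d : ℝ) * ⌊x / d⌋₊ := by
    simp only [Nat.floor_div_natCast]
    have h := congrArg (Int.cast : ℤ → ℝ) (card_filter_coprime_Ioc_eq_sum_moebius ha ⌊x⌋₊)
    push_cast at h
    exact h
  have hmain : x / a * φ a = ∑ d ∈ a.divisors, (μ d : ℝ) * (x / d) := by
    rw [totient_eq_sum_moebius_mul_div, mul_sum]
    refine sum_congr rfl fun d hd => ?_
    have hd0 : (d : ℝ) ≠ 0 := mod_cast (Nat.pos_of_mem_divisors hd).ne'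
    rw [Nat.cast_div (Nat.dvd_of_mem_divisors hd) hd0]
    field_simp
  calc |(#{v ∈ Ioc 0 ⌊x⌋₊ | v.Coprime a} : ℝ) - x / a * φ a|
      = |∑ d ∈ a.divisors, (μ d : ℝ) * (⌊x / d⌋₊ - x / d)| := by
        rw [hcount, hmain, ← sum_sub_distrib]
        simp only [mul_sub]
    _ ≤ ∑ d ∈ a.divisors, |(μ d : ℝ)| * |(⌊x / d⌋₊ : ℝ) - x / d| := by
        simp only [← abs_mul]
        exact abs_sum_le_sum_abs _ _
    _ ≤ ∑ d ∈ a.divisors, |(μ d : ℝ)| := by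
        gcongr with d
        exact mul_le_of_le_one_right (abs_nonneg _) (abs_natFloor_sub_le (by positivity))
    _ = 2 ^ a.primeFactors.card := by exact_mod_cast sum_abs_moebius_divisors ha

theorem count_coprime_le (a : ℕ) (ha : 0 < a) :
    (Set.ncard {v : ℕ | 1 ≤ v ∧ (v : ℝ) ≤ 0.1 * (a : ℝ) ∧ Nat.gcd v a = 1} : ℝ)
      ≤ 0.1 * (Nat.totient a : ℝ) + 2 ^ a.primeFactors.card := by
  have hx : (0 : ℝ) ≤ 0.1 * a := by positivity
  have hset : {v : ℕ | 1 ≤ v ∧ (v : ℝ) ≤ 0.1 * (a : ℝ) ∧ Nat.gcd v a = 1}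
      = ↑({v ∈ Ioc 0 ⌊0.1 * (a : ℝ)⌋₊ | v.Coprime a}) := by
    ext v
    simp [Nat.le_floor_iff hx, Nat.one_le_iff_ne_zero, Nat.pos_iff_ne_zero, and_assoc, Nat.Coprime]
  have hbound := abs_card_filter_coprime_Ioc_floor_sub_le ha.ne' hx
  rw [mul_div_cancel_right₀ _ (by positivity)] at hbound
  rw [hset, Set.ncard_coe_finset]
  linarith [le_abs_self ((#{v ∈ Ioc 0 ⌊0.1 * (a : ℝ)⌋₊ | v.Coprime a} : ℝ) - 0.1 * φ a)]
end

section
/- For every positive integer a, 2^{ω(a)}/φ(a) ≤ √30/√a, where φ is Euler's totient function and ω(a) is the number of distinct prime factors of a. -/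
/-!
By Euler's product formula `φ(a) · ∏ p = a · ∏ (p - 1)` over the primes `p ∣ a`, and since
`∏ p ≤ a`, we get `∏ (p - 1) ≤ φ(a)` and hence `a · ∏ (p - 1)² ≤ φ(a)² · ∏ p`.
The claim `a · 4^ω(a) ≤ 30 · φ(a)²` therefore follows from `∏ 4p ≤ 30 · ∏ (p - 1)²`,
a product of local factors `4p / (p - 1)²`: these are `8, 3, 5/4` at `p = 2, 3, 5`
and at most `1` for `p ≥ 7`.
-/

open Finset

namespace Nat

theorem prod_primeFactors_sub_one_le_totient {n : ℕ} (hn : n ≠ 0) :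
    ∏ p ∈ n.primeFactors, (p - 1) ≤ φ n := by
  have hrad_pos : 0 < ∏ p ∈ n.primeFactors, p := prod_pos fun _ => pos_of_mem_primeFactors
  have hrad_le : ∏ p ∈ n.primeFactors, p ≤ n :=
    le_of_dvd (pos_of_ne_zero hn) (prod_primeFactors_dvd n)
  rw [totient_eq_div_primeFactors_mul]
  exact Nat.le_mul_of_pos_left _ (Nat.div_pos hrad_le hrad_pos)

theorem four_mul_le_sub_one_sq {p : ℕ} (hp : 6 ≤ p) : 4 * p ≤ (p - 1) ^ 2 := by
  obtain ⟨q, rfl⟩ : ∃ q, p = q + 1 := ⟨p - 1, by omega⟩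
  simp only [Nat.add_sub_cancel]
  nlinarith

theorem prod_four_mul_le_thirty_mul_prod_sub_one_sq {S : Finset ℕ}
    (hS : ∀ p ∈ S, p.Prime) :
    ∏ p ∈ S, 4 * p ≤ 30 * ∏ p ∈ S, (p - 1) ^ 2 := by
  let small : Finset ℕ := {2, 3, 5}
  have hsmall : ∀ T ⊆ small, ∏ p ∈ T, 4 * p ≤ 30 * ∏ p ∈ T, (p - 1) ^ 2 := by decide
  have hlarge :
      ∏ p ∈ S with p ∉ small, 4 * p ≤ ∏ p ∈ S with p ∉ small, (p - 1) ^ 2 := by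
    refine prod_le_prod' fun p hp => four_mul_le_sub_one_sq ?_
    obtain ⟨hpS, hp_large⟩ := mem_filter.mp hp
    have := (hS p hpS).five_le_of_ne_two_of_ne_three (by grind) (by grind)
    grind
  rw [← prod_filter_mul_prod_filter_not S (· ∈ small),
    ← prod_filter_mul_prod_filter_not S (· ∈ small), ← mul_assoc]
  exact Nat.mul_le_mul (hsmall _ fun _ hp => (mem_filter.mp hp).2) hlarge

theorem mul_four_pow_card_primeFactors_le {a : ℕ} (ha : a ≠ 0) :
    a * 4 ^ a.primeFactors.card ≤ 30 * φ a ^ 2 := by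
  set P := ∏ p ∈ a.primeFactors, p
  set Q := ∏ p ∈ a.primeFactors, (p - 1)
  have hP : 0 < P := prod_pos fun _ => pos_of_mem_primeFactors
  have hlocal : 4 ^ a.primeFactors.card * P ≤ 30 * Q ^ 2 := by
    have h := prod_four_mul_le_thirty_mul_prod_sub_one_sq (S := a.primeFactors)
      fun _ => prime_of_mem_primeFactors
    rwa [prod_mul_distrib, prod_const, prod_pow] at h
  have hQ : Q ≤ φ a := prod_primeFactors_sub_one_le_totient ha
  have heuler : φ a * P = a * Q := totient_mul_prod_primeFactors a
  refine Nat.le_of_mul_le_mul_right ?_ hP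
  calc a * 4 ^ a.primeFactors.card * P
      ≤ a * (30 * Q ^ 2) := by rw [mul_assoc]; exact Nat.mul_le_mul_left a hlocal
    _ = 30 * (φ a * P) * Q := by rw [heuler]; ring
    _ ≤ 30 * (φ a * P) * φ a := Nat.mul_le_mul_left _ hQ
    _ = 30 * φ a ^ 2 * P := by ring

end Nat

theorem two_pow_omega_div_totient_le (a : ℕ) (ha : 0 < a) :
    (2 : ℝ) ^ a.primeFactors.card / (Nat.totient a : ℝ) ≤
      Real.sqrt 30 / Real.sqrt a := by
  have ha' : (0 : ℝ) < a := by exact_mod_cast ha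
  have hφ : (0 : ℝ) < Nat.totient a := by exact_mod_cast Nat.totient_pos.mpr ha
  have key : (a : ℝ) * ((2 : ℝ) ^ a.primeFactors.card) ^ 2 ≤
      30 * (Nat.totient a : ℝ) ^ 2 := by
    rw [← pow_mul, mul_comm _ 2, pow_mul]
    exact_mod_cast Nat.mul_four_pow_card_primeFactors_le ha.ne'
  rw [div_le_div_iff₀ hφ (Real.sqrt_pos.mpr ha')]
  calc (2 : ℝ) ^ a.primeFactors.card * Real.sqrt a
      = Real.sqrt (a * ((2 : ℝ) ^ a.primeFactors.card) ^ 2) := by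
        rw [Real.sqrt_mul ha'.le, Real.sqrt_sq (by positivity), mul_comm]
    _ ≤ Real.sqrt (30 * (Nat.totient a : ℝ) ^ 2) := Real.sqrt_le_sqrt key
    _ = Real.sqrt 30 * Nat.totient a := by
        rw [Real.sqrt_mul (by norm_num), Real.sqrt_sq hφ.le]
end

section
/- For every odd integer b > 3, the number π*(2,b) of primes not representable as 2u + bv with u, v nonnegative integers equals π(b−2) − 1, where π(x) is the number of primes not exceeding x. -/
/-!
A natural number lies in `⟨2, b⟩` (for odd `b`) exactly when it is even or at least `b`: odd
numbers need an odd number of copies of `b`. Hence the primes outside `⟨2, b⟩` are the odd primes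
below `b`. Since `b - 1` is even and greater than `2`, the primes below `b` are those up to
`b - 2`, and removing the prime `2` gives `π(b - 2) - 1`.
-/

open Nat Finset
open scoped Nat.Prime

theorem exists_eq_two_mul_add_mul_iff {b n : ℕ} (hb : Odd b) :
    (∃ u v : ℕ, n = 2 * u + b * v) ↔ Even n ∨ b ≤ n := by
  constructor
  · rintro ⟨u, (_ | v), rfl⟩
    · exact Or.inl (by simp)
    · exact Or.inr (by nlinarith)
  · rintro (⟨k, rfl⟩ | hbn)
    · exact ⟨k, 0, by omega⟩
    · rcases Nat.even_or_odd n with ⟨k, rfl⟩ | ⟨k, rfl⟩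
      · exact ⟨k, 0, by omega⟩
      · obtain ⟨m, rfl⟩ := hb
        exact ⟨k - m, 1, by omega⟩

theorem setOf_prime_not_exists_two_mul_add_mul {b : ℕ} (hb : Odd b) :
    {p : ℕ | p.Prime ∧ ¬ ∃ u v : ℕ, p = 2 * u + b * v} = ↑((primesBelow b).erase 2) := by
  ext p
  simp only [exists_eq_two_mul_add_mul_iff hb, Set.mem_ofPred_eq, coe_erase, Set.mem_sdiff,
    mem_coe, mem_primesBelow, Set.mem_singleton_iff]
  constructor
  · rintro ⟨hp, hpb⟩
    exact ⟨⟨by omega, hp⟩, fun h2 => hpb (Or.inl (hp.even_iff.mpr h2))⟩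
  · rintro ⟨⟨hpb, hp⟩, hp2⟩
    exact ⟨hp, by rw [hp.even_iff]; omega⟩

theorem primeCounting'_eq_primeCounting_sub_two {b : ℕ} (hb : Odd b) (hb3 : 3 < b) :
    π' b = π (b - 2) := by
  have hb1 : ¬ (b - 1).Prime := fun hp =>
    absurd (hp.even_iff.mp (Nat.Odd.sub_odd hb odd_one)) (by omega)
  calc π' b = π' (b - 1 + 1) := by rw [Nat.sub_add_cancel (by omega)]
    _ = π' (b - 1) := count_succ_eq_count hb1
    _ = π (b - 2) := by rw [← primeCounting_sub_one]; rfl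

theorem piStar_two (b : ℕ) (hb : Odd b) (hb3 : 3 < b) :
    (piStar 2 b : ℤ) = (Nat.primeCounting (b - 2) : ℤ) - 1 := by
  have h2 : 2 ∈ primesBelow b := mem_primesBelow.mpr ⟨by omega, prime_two⟩
  have hcard := card_erase_add_one h2
  rw [primesBelow_card_eq_primeCounting', primeCounting'_eq_primeCounting_sub_two hb hb3] at hcard
  rw [piStar, setOf_prime_not_exists_two_mul_add_mul hb, Set.ncard_coe_finset]
  omega
end
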